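/- Let n' ≥ 2, c' = (c'_1,…,c'_{n'}) ∈ ℂ^{n'}, and let W_{c'} ⊆ V^{⊗n'} be the image of F(c'). Consider the space V ⊗ V^{⊗n'} with the copies of V labeled 0, 1, …, n' from left to right. Then for every v ∈ ℂ the endomorphism R_{0,1}(v−c'_1) R_{0,2}(v−c'_2) ⋯ R_{0,n'}(v−c'_{n'}) of V ⊗ V^{⊗n'} maps the subspace V ⊗ W_{c'} into itself. -/

import Mathlib

/-!
We model the finite-dimensional complex vector space `V` as `ℂ^N` (i.e. `Fin N → ℂ`),
so that `V^{⊗ n}` is `(Fin n → Fin N) → ℂ` and endomorphisms of `V^{⊗ n}` are matrices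
indexed by multi-indices `Fin n → Fin N`.
-/

open scoped BigOperators

noncomputable section

/-- Endomorphisms of `V ⊗ V` for `V = ℂ^N`. -/
abbrev End2 (N : ℕ) := Matrix (Fin N × Fin N) (Fin N × Fin N) ℂ

/-- Endomorphisms of `V^{⊗ n}` for `V = ℂ^N`. -/
abbrev EndT (N n : ℕ) := Matrix (Fin n → Fin N) (Fin n → Fin N) ℂ

/-- `X_{a,b}` : the endomorphism `X` of `V ⊗ V` applied to the tensor factors `a` and `b`
(in that order) of `V^{⊗ n}`, and the identity on all other factors. -/
def op2 (N n : ℕ) (X : End2 N) (a b : Fin n) : EndT N n :=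
  fun f g => X (f a, f b) (g a, g b) *
    ∏ i : Fin n, if i ≠ a ∧ i ≠ b then (if f i = g i then (1 : ℂ) else 0) else 1

/-- The flip (permutation) operator `P : x ⊗ y ↦ y ⊗ x` on `V ⊗ V`. -/
def flipMat (N : ℕ) : End2 N := fun p q => if p.1 = q.2 ∧ p.2 = q.1 then 1 else 0

/-- `R` is a solution of the Yang--Baxter equation (with additive spectral parameters)
on `V ⊗ V ⊗ V`:  `R₁₂(u) R₁₃(u+v) R₂₃(v) = R₂₃(v) R₁₃(u+v) R₁₂(u)`. -/
def YangBaxter (N : ℕ) (R : ℂ → End2 N) : Prop :=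
  ∀ u v : ℂ,
    op2 N 3 (R u) 0 1 * op2 N 3 (R (u + v)) 0 2 * op2 N 3 (R v) 1 2 =
    op2 N 3 (R v) 1 2 * op2 N 3 (R (u + v)) 0 2 * op2 N 3 (R u) 0 1

/-- The fused operator `R_{c,c'}(u)`, acting on `V^{⊗ m}`, where the `n` factors of the first
block are embedded via `a` and the `n'` factors of the second block via `b`:
`R_{c,c'}(u) = ∏→_{i=1..n'} [ R_{n,i'}(u+c_n−c'_i) ⋯ R_{2,i'}(u+c_2−c'_i) R_{1,i'}(u+c_1−c'_i) ]`. -/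
def fusedOp (N : ℕ) (R : ℂ → End2 N) {m n n' : ℕ} (a : Fin n → Fin m) (b : Fin n' → Fin m)
    (c : Fin n → ℂ) (c' : Fin n' → ℂ) (u : ℂ) : EndT N m :=
  ((List.finRange n').map fun i =>
    (((List.finRange n).reverse).map fun k =>
      op2 N m (R (u + c k - c' i)) (a k) (b i)).prod).prod

/-- The list of pairs `(i,j)` with `i < j`, in lexicographic order. -/
def lexPairs (n : ℕ) : List (Fin n × Fin n) :=
  (List.finRange n).flatMap fun i =>
    ((List.finRange n).filter fun j => decide (i < j)).map fun j => (i, j)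

/-- The operator `F(c) = ∏→_{1 ≤ i < j ≤ n} R_{i,j}(c_i − c_j)` on `V^{⊗ n}`
(product over the pairs `i < j` in lexicographic order). -/
def Fop (N : ℕ) (R : ℂ → End2 N) {n : ℕ} (c : Fin n → ℂ) : EndT N n :=
  ((lexPairs n).map fun p => op2 N n (R (c p.1 - c p.2)) p.1 p.2).prod

/-- The endomorphism of `V^{⊗ n}` embedded into `V^{⊗ m}`, acting on the factors listed
by `e` and identically on all other factors. -/
def opBlock (N : ℕ) {m n : ℕ} (e : Fin n → Fin m) (X : EndT N n) : EndT N m :=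
  fun f g => X (f ∘ e) (g ∘ e) *
    ∏ i : Fin m, if ∀ k, e k ≠ i then (if f i = g i then (1 : ℂ) else 0) else 1

/-- The operator `P_π` on `V^{⊗ n}` permuting the tensor factors:
`P_π (x_1 ⊗ ⋯ ⊗ x_n) = x_{π(1)} ⊗ ⋯ ⊗ x_{π(n)}`. -/
def permMat (N n : ℕ) (π : Equiv.Perm (Fin n)) : EndT N n :=
  fun f g => if f = g ∘ π then 1 else 0

/-- The tensor product of a vector of `V^{⊗ n}` and a vector of `V^{⊗ n'}`,
as a vector of `V^{⊗ (n+n')}`. -/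
def tensVec (N : ℕ) {n n' : ℕ} (x : (Fin n → Fin N) → ℂ) (y : (Fin n' → Fin N) → ℂ) :
    (Fin (n + n') → Fin N) → ℂ :=
  fun f => x (fun i => f (Fin.castAdd n' i)) * y (fun j => f (Fin.natAdd n j))

end


/-!
Write `T = R_{0,1}(v-c'_1) ⋯ R_{0,n'}(v-c'_{n'})` and `F = F(c')` acting on the factors
`1, …, n'`. The Yang–Baxter equation `R_{0,i} R_{0,j} R_{i,j} = R_{i,j} R_{0,j} R_{0,i}` (with
`(v - c'_i) - (v - c'_j) = c'_i - c'_j`) lets the factors `R_{0,j}` of `T` be pushed through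
`F` one at a time, reversing their order: `T F = F T'` with
`T' = R_{0,n'}(v-c'_{n'}) ⋯ R_{0,1}(v-c'_1)`. Hence `T (F y) = F (T' y)` lies in the image of `F`.
-/

open Function

variable {N M : ℕ}

theorem op2_apply (X : End2 N) (a b : Fin M) (f g : Fin M → Fin N) :
    op2 N M X a b f g =
      if ∀ i, i ≠ a → i ≠ b → f i = g i then X (f a, f b) (g a, g b) else 0 := by
  have hind :
      (∏ i : Fin M, if i ≠ a ∧ i ≠ b then (if f i = g i then (1 : ℂ) else 0) else 1) =
        ∏ i : Fin M, if (i ≠ a → i ≠ b → f i = g i) then 1 else 0 :=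
    Finset.prod_congr rfl fun i _ => by split_ifs <;> tauto
  rw [op2, hind, Finset.prod_boole]
  simp

theorem op2_mul_op2_apply (X Y : End2 N) {a b c d : Fin M}
    (hca : c ≠ a) (hcb : c ≠ b) (hda : d ≠ a) (hdb : d ≠ b) (f g : Fin M → Fin N) :
    (op2 N M X a b * op2 N M Y c d) f g =
      if ∀ i, i ≠ a → i ≠ b → i ≠ c → i ≠ d → f i = g i then
        X (f a, f b) (g a, g b) * Y (f c, f d) (g c, g d) else 0 := by
  -- the only intermediate multi-index with a nonzero summand
  set h₀ : Fin M → Fin N := fun i => if i = a ∨ i = b then g i else f i with hh₀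
  rw [Matrix.mul_apply, Finset.sum_eq_single h₀ _ (by simp)]
  · have hf : ∀ i, i ≠ a → i ≠ b → f i = h₀ i := fun i hia hib => by
      simp [hh₀, hia, hib]
    have hg : (∀ i, i ≠ c → i ≠ d → h₀ i = g i) ↔
        ∀ i, i ≠ a → i ≠ b → i ≠ c → i ≠ d → f i = g i := by
      refine forall_congr' fun i => ?_
      simp only [hh₀]
      split_ifs <;> tauto
    rw [op2_apply, op2_apply, if_pos hf, mul_ite, mul_zero]
    refine if_congr hg ?_ rfl
    simp [hh₀, hca, hcb, hda, hdb]
  · intro h _ hne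
    rw [op2_apply, op2_apply]
    split_ifs with hfh hhg
    · refine absurd (funext fun i => ?_) hne
      by_cases hi : i = a ∨ i = b
      · rcases hi with rfl | rfl <;> simp_all [eq_comm]
      · simp only [hh₀, if_neg hi]; push Not at hi; exact (hfh i hi.1 hi.2).symm
    all_goals simp

theorem op2_commute (X Y : End2 N) {a b c d : Fin M}
    (hca : c ≠ a) (hcb : c ≠ b) (hda : d ≠ a) (hdb : d ≠ b) :
    Commute (op2 N M X a b) (op2 N M Y c d) := by
  ext f g
  rw [op2_mul_op2_apply X Y hca hcb hda hdb,
    op2_mul_op2_apply Y X hca.symm hda.symm hcb.symm hdb.symm, mul_comm]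
  exact if_congr (forall_congr' fun i => by tauto) rfl rfl

section opBlock

variable {n : ℕ} {e : Fin n → Fin M}

theorem opBlock_apply (X : EndT N n) (f g : Fin M → Fin N) :
    opBlock N e X f g = if ∀ i ∉ Set.range e, f i = g i then X (f ∘ e) (g ∘ e) else 0 := by
  have hind : (∏ i : Fin M, if ∀ k, e k ≠ i then (if f i = g i then (1 : ℂ) else 0) else 1)
      = ∏ i : Fin M, if (i ∉ Set.range e → f i = g i) then 1 else 0 :=
    Finset.prod_congr rfl fun i _ => by simp only [Set.mem_range, not_exists]; split_ifs <;> tauto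
  rw [opBlock, hind, Finset.prod_boole]
  simp

theorem sum_ite_eqOn_compl_range (he : Injective e) (f : Fin M → Fin N)
    (G : (Fin n → Fin N) → ℂ) :
    ∑ h, (if ∀ i ∉ Set.range e, f i = h i then G (h ∘ e) else 0) = ∑ k, G k := by
  rw [← Finset.sum_filter]
  refine Finset.sum_nbij' (· ∘ e) (fun k => extend e k f) (by simp) ?_ ?_ ?_ (fun _ _ => rfl)
  · intro k _
    simp only [Finset.mem_filter, Finset.mem_univ, true_and]
    exact fun i hi => (extend_apply' _ _ _ fun ⟨k, hk⟩ => hi ⟨k, hk⟩).symm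
  · intro h hh
    simp only [Finset.mem_filter, Finset.mem_univ, true_and] at hh
    funext i
    by_cases hi : i ∈ Set.range e
    · obtain ⟨k, rfl⟩ := hi
      exact he.extend_apply _ _ k
    · exact (extend_apply' _ _ _ fun ⟨k, hk⟩ => hi ⟨k, hk⟩).trans (hh i hi)
  · intro k _
    funext j
    exact he.extend_apply _ _ j

theorem opBlock_one : opBlock N e (1 : EndT N n) = 1 := by
  ext f g
  rw [opBlock_apply, Matrix.one_apply, Matrix.one_apply, ← ite_and]
  refine if_congr ⟨fun ⟨hoff, hon⟩ => funext fun i => ?_,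
    fun hfg => ⟨fun i _ => congrFun hfg i, hfg ▸ rfl⟩⟩ rfl rfl
  by_cases hi : i ∈ Set.range e
  · obtain ⟨k, rfl⟩ := hi
    exact congrFun hon k
  · exact hoff i hi

theorem opBlock_mul (he : Injective e) (X Y : EndT N n) :
    opBlock N e (X * Y) = opBlock N e X * opBlock N e Y := by
  ext f g
  simp only [Matrix.mul_apply, opBlock_apply]
  by_cases hfg : ∀ i ∉ Set.range e, f i = g i
  · rw [if_pos hfg, ← sum_ite_eqOn_compl_range he f]
    refine Finset.sum_congr rfl fun h _ => ?_
    by_cases hfh : ∀ i ∉ Set.range e, f i = h i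
    · rw [if_pos hfh, if_pos hfh, if_pos fun i hi => (hfh i hi).symm.trans (hfg i hi)]
    · rw [if_neg hfh, if_neg hfh, zero_mul]
  · rw [if_neg hfg]
    refine (Finset.sum_eq_zero fun h _ => ?_).symm
    by_cases hfh : ∀ i ∉ Set.range e, f i = h i
    · have hhg : ¬∀ i ∉ Set.range e, h i = g i := fun hhg =>
        hfg fun i hi => (hfh i hi).trans (hhg i hi)
      rw [if_neg hhg, mul_zero]
    · rw [if_neg hfh, zero_mul]

def opBlockHom (he : Injective e) : EndT N n →* EndT N M where
  toFun := opBlock N e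
  map_one' := opBlock_one
  map_mul' := opBlock_mul he

theorem opBlock_op2 (he : Injective e) (X : End2 N) (i j : Fin n) :
    opBlock N e (op2 N n X i j) = op2 N M X (e i) (e j) := by
  ext f g
  rw [opBlock_apply, op2_apply, op2_apply, ← ite_and]
  refine if_congr ⟨fun ⟨hoff, hon⟩ l hli hlj => ?_,
    fun h => ⟨fun l hl => ?_, fun k hki hkj => ?_⟩⟩ rfl rfl
  · by_cases hl : l ∈ Set.range e
    · obtain ⟨k, rfl⟩ := hl
      exact hon k (fun h => hli (h ▸ rfl)) (fun h => hlj (h ▸ rfl))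
    · exact hoff l hl
  · exact h l (fun h => hl ⟨i, h.symm⟩) (fun h => hl ⟨j, h.symm⟩)
  · exact h (e k) (he.ne hki) (he.ne hkj)

end opBlock

theorem YangBaxter.op2_relation {R : ℂ → End2 N} (hR : YangBaxter N R) {a b c : Fin M}
    (hab : a ≠ b) (hac : a ≠ c) (hbc : b ≠ c) (u w : ℂ) :
    op2 N M (R u) a b * op2 N M (R (u + w)) a c * op2 N M (R w) b c =
      op2 N M (R w) b c * op2 N M (R (u + w)) a c * op2 N M (R u) a b := by
  have he : Injective ![a, b, c] := by
    intro x y hxy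
    fin_cases x <;> fin_cases y <;> simp_all [eq_comm]
  simpa only [map_mul, opBlockHom, MonoidHom.coe_mk, OneHom.coe_mk, opBlock_op2 he,
    Matrix.cons_val_zero, Matrix.cons_val_one, Matrix.cons_val_two, Matrix.head_cons,
    Matrix.tail_cons]
    using congrArg (opBlockHom he) (hR u w)

def pairsOf {α : Type*} : List α → List (α × α)
  | [] => []
  | i :: t => t.map (i, ·) ++ pairsOf t

theorem pairsOf_map {α β : Type*} (f : α → β) (l : List α) :
    pairsOf (l.map f) = (pairsOf l).map (Prod.map f f) := by
  induction l with
  | nil => rfl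
  | cons i t ih => simp [pairsOf, ih]

theorem mem_pairsOf {α : Type*} {l : List α} {p : α × α} (hp : p ∈ pairsOf l) :
    p.1 ∈ l ∧ p.2 ∈ l := by
  induction l with
  | nil => simp [pairsOf] at hp
  | cons i t ih =>
    simp only [pairsOf, List.mem_append, List.mem_map] at hp
    rcases hp with ⟨j, hj, rfl⟩ | hp
    · simp [hj]
    · exact (ih hp).imp (List.mem_cons_of_mem i) (List.mem_cons_of_mem i)

theorem pairsOf_eq_flatMap_filter {n : ℕ} {l : List (Fin n)} (hl : l.Pairwise (· < ·)) :
    pairsOf l = l.flatMap fun i => (l.filter fun j => decide (i < j)).map fun j => (i, j) := by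
  induction l with
  | nil => rfl
  | cons i t ih =>
    rw [List.pairwise_cons] at hl
    have hhead : ((i :: t).filter fun j => decide (i < j)) = t := by
      rw [List.filter_cons, if_neg (by simp)]
      exact List.filter_eq_self.mpr fun j hj => decide_eq_true (hl.1 j hj)
    have htail : ∀ a ∈ t, (((i :: t).filter fun j => decide (a < j)).map fun j => (a, j)) =
        (t.filter fun j => decide (a < j)).map fun j => (a, j) :=
      fun a ha => by rw [List.filter_cons, if_neg (by simpa using (hl.1 a ha).le)]
    rw [List.flatMap_cons, hhead, List.flatMap_congr htail, ← ih hl.2]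
    rfl

theorem lexPairs_eq_pairsOf (n : ℕ) : lexPairs n = pairsOf (List.finRange n) :=
  (pairsOf_eq_flatMap_filter (List.pairwise_lt_finRange n)).symm

section Monodromy

variable (R : ℂ → End2 N)

def monodromy (z : Fin M) (s : Fin M → ℂ) (L : List (Fin M)) : EndT N M :=
  (L.map fun j => op2 N M (R (s j)) z j).prod

/-- `F(c)` on the tensor factors listed in `L`. -/
def FopOn (c : Fin M → ℂ) (L : List (Fin M)) : EndT N M :=
  ((pairsOf L).map fun p => op2 N M (R (c p.1 - c p.2)) p.1 p.2).prod

variable {R}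

@[simp]
theorem monodromy_nil (z : Fin M) (s : Fin M → ℂ) : monodromy R z s [] = 1 := rfl

@[simp]
theorem monodromy_cons (z i : Fin M) (s : Fin M → ℂ) (L : List (Fin M)) :
    monodromy R z s (i :: L) = op2 N M (R (s i)) z i * monodromy R z s L := List.prod_cons

@[simp]
theorem monodromy_append (z : Fin M) (s : Fin M → ℂ) (L L' : List (Fin M)) :
    monodromy R z s (L ++ L') = monodromy R z s L * monodromy R z s L' := by
  simp [monodromy]

@[simp]
theorem FopOn_nil (c : Fin M → ℂ) : FopOn R c [] = 1 := rfl

@[simp]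
theorem FopOn_cons (c : Fin M → ℂ) (i : Fin M) (L : List (Fin M)) :
    FopOn R c (i :: L) = monodromy R i (fun j => c i - c j) L * FopOn R c L := by
  simp only [FopOn, monodromy, pairsOf, List.map_append, List.map_map, List.prod_append]
  rfl

theorem Fop_eq_FopOn {n : ℕ} (c : Fin n → ℂ) : Fop N R c = FopOn R c (List.finRange n) := by
  rw [Fop, lexPairs_eq_pairsOf, FopOn]

theorem opBlock_FopOn {n : ℕ} {e : Fin n → Fin M} (he : Injective e) (c : Fin M → ℂ)
    (L : List (Fin n)) : opBlock N e (FopOn R (c ∘ e) L) = FopOn R c (L.map e) := by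
  change opBlockHom he _ = _
  rw [FopOn, map_list_prod, FopOn, pairsOf_map, List.map_map, List.map_map]
  congr 1
  exact List.map_congr_left fun p _ => opBlock_op2 he _ p.1 p.2

theorem commute_op2_monodromy (X : End2 N) {a b z : Fin M} (haz : a ≠ z) (hbz : b ≠ z)
    (s : Fin M → ℂ) {L : List (Fin M)} (ha : a ∉ L) (hb : b ∉ L) :
    Commute (op2 N M X a b) (monodromy R z s L) :=
  Commute.list_prod_right _ _ fun _ hy => by
    obtain ⟨j, hj, rfl⟩ := List.mem_map.mp hy
    exact op2_commute _ _ haz.symm hbz.symm (ne_of_mem_of_not_mem hj ha)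
      (ne_of_mem_of_not_mem hj hb)

theorem commute_op2_FopOn (X : End2 N) {a b : Fin M} (c : Fin M → ℂ) {L : List (Fin M)}
    (ha : a ∉ L) (hb : b ∉ L) : Commute (op2 N M X a b) (FopOn R c L) :=
  Commute.list_prod_right _ _ fun _ hy => by
    obtain ⟨p, hp, rfl⟩ := List.mem_map.mp hy
    obtain ⟨h1, h2⟩ := mem_pairsOf hp
    exact op2_commute _ _ (ne_of_mem_of_not_mem h1 ha) (ne_of_mem_of_not_mem h1 hb)
      (ne_of_mem_of_not_mem h2 ha) (ne_of_mem_of_not_mem h2 hb)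

end Monodromy

namespace YangBaxter

variable {R : ℂ → End2 N}

theorem op2_mul_monodromy_mul_monodromy (hR : YangBaxter N R) {z w : Fin M} (hzw : z ≠ w)
    (u : ℂ) (s : Fin M → ℂ) {L : List (Fin M)} (hz : z ∉ L) (hw : w ∉ L) (hL : L.Nodup) :
    op2 N M (R u) z w * monodromy R z (fun j => u + s j) L * monodromy R w s L =
      monodromy R w s L * monodromy R z (fun j => u + s j) L * op2 N M (R u) z w := by
  induction L with
  | nil => simp
  | cons j t ih =>
    simp only [List.mem_cons, not_or] at hz hw
    obtain ⟨hjt, ht⟩ := List.nodup_cons.mp hL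
    simp only [monodromy_cons]
    set A := op2 N M (R u) z w
    set Xj := op2 N M (R (u + s j)) z j
    set Yj := op2 N M (R (s j)) w j
    set Pz := monodromy R z (fun j => u + s j) t
    set Pw := monodromy R w s t
    have hPzYj : Pz * Yj = Yj * Pz :=
      (commute_op2_monodromy _ hzw.symm (Ne.symm hz.1) _ hw.2 hjt).symm.eq
    have hXjPw : Xj * Pw = Pw * Xj :=
      (commute_op2_monodromy _ hzw (Ne.symm hw.1) _ hz.2 hjt).eq
    have hybe : A * Xj * Yj = Yj * Xj * A := hR.op2_relation hzw hz.1 hw.1 u (s j)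
    calc A * (Xj * Pz) * (Yj * Pw)
        = A * Xj * (Pz * Yj) * Pw := by simp only [mul_assoc]
      _ = (A * Xj * Yj) * (Pz * Pw) := by rw [hPzYj]; simp only [mul_assoc]
      _ = Yj * Xj * (A * Pz * Pw) := by rw [hybe]; simp only [mul_assoc]
      _ = Yj * (Xj * Pw) * Pz * A := by rw [ih hz.2 hw.2 ht]; simp only [mul_assoc]
      _ = Yj * Pw * (Xj * Pz) * A := by rw [hXjPw]; simp only [mul_assoc]

theorem monodromy_mul_FopOn (hR : YangBaxter N R) (c : Fin M → ℂ) (v : ℂ) {z : Fin M}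
    {L : List (Fin M)} (hz : z ∉ L) (hL : L.Nodup) :
    monodromy R z (fun j => v - c j) L * FopOn R c L =
      FopOn R c L * monodromy R z (fun j => v - c j) L.reverse := by
  induction L with
  | nil => simp
  | cons i t ih =>
    simp only [List.mem_cons, not_or] at hz
    obtain ⟨hit, ht⟩ := List.nodup_cons.mp hL
    simp only [monodromy_cons, FopOn_cons, List.reverse_cons, monodromy_append, monodromy_nil,
      mul_one]
    set A := op2 N M (R (v - c i)) z i
    set Pz := monodromy R z (fun j => v - c j) t
    set Row := monodromy R i (fun j => c i - c j) t
    set Ft := FopOn R c t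
    have hrow : A * Pz * Row = Row * Pz * A := by
      simpa only [sub_add_sub_cancel] using
        hR.op2_mul_monodromy_mul_monodromy hz.1 (v - c i) (fun j => c i - c j) hz.2 hit ht
    have hFt : A * Ft = Ft * A := (commute_op2_FopOn _ c hz.2 hit).eq
    calc A * Pz * (Row * Ft)
        = Row * Pz * (A * Ft) := by rw [← mul_assoc, hrow]; simp only [mul_assoc]
      _ = Row * (Pz * Ft) * A := by rw [hFt]; simp only [mul_assoc]
      _ = Row * Ft * (monodromy R z (fun j => v - c j) t.reverse * A) := by
          rw [ih hz.2 ht]; simp only [mul_assoc]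

end YangBaxter

theorem left_invariant_subspace_general
    (N : ℕ) (R : ℂ → End2 N) (hR : YangBaxter N R)
    (n' : ℕ) (c' : Fin n' → ℂ) (v : ℂ) :
    ∀ x ∈ LinearMap.range
        (Matrix.mulVecLin (opBlock N (Fin.succ : Fin n' → Fin (n' + 1)) (Fop N R c'))),
      Matrix.mulVec
        (((List.finRange n').map fun i =>
          op2 N (n' + 1) (R (v - c' i)) 0 i.succ).prod) x ∈
      LinearMap.range
        (Matrix.mulVecLin (opBlock N (Fin.succ : Fin n' → Fin (n' + 1)) (Fop N R c'))) := by
  rintro _ ⟨y, rfl⟩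
  -- label factor `0` by the spectral parameter `v` and factor `i.succ` by `c' i`
  set c : Fin (n' + 1) → ℂ := Fin.cons v c'
  set L := (List.finRange n').map Fin.succ
  have hF : opBlock N Fin.succ (Fop N R c') = FopOn R c L := by
    rw [Fop_eq_FopOn, ← opBlock_FopOn (Fin.succ_injective n')]
    rfl
  have hT : ((List.finRange n').map fun i => op2 N (n' + 1) (R (v - c' i)) 0 i.succ).prod =
      monodromy R 0 (fun j => v - c j) L := by
    simp [monodromy, L, c, List.map_map, comp_def]
  have hcomm := hR.monodromy_mul_FopOn c v (z := 0) (L := L) (by simp [L, Fin.succ_ne_zero])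
    ((List.nodup_finRange n').map (Fin.succ_injective n'))
  refine ⟨(monodromy R 0 (fun j => v - c j) L.reverse).mulVec y, ?_⟩
  simp only [Matrix.mulVecLin_apply, Matrix.mulVec_mulVec, hF, hT, hcomm]

/-- On `V ⊗ V^{⊗n'}` (copies of `V` labelled `0, 1, …, n'`), the operator
`R_{0,1}(v−c'_1) R_{0,2}(v−c'_2) ⋯ R_{0,n'}(v−c'_{n'})` maps the subspace `V ⊗ W_{c'}`
(the image of `Id ⊗ F(c')`) into itself. -/
theorem left_invariant_subspace
    (N : ℕ) (R : ℂ → End2 N) (hR : YangBaxter N R)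
    (n' : ℕ) (hn' : 2 ≤ n') (c' : Fin n' → ℂ) (v : ℂ) :
    ∀ x ∈ LinearMap.range
        (Matrix.mulVecLin (opBlock N (Fin.succ : Fin n' → Fin (n' + 1)) (Fop N R c'))),
      Matrix.mulVec
        (((List.finRange n').map fun i =>
          op2 N (n' + 1) (R (v - c' i)) 0 i.succ).prod) x ∈
      LinearMap.range
        (Matrix.mulVecLin (opBlock N (Fin.succ : Fin n' → Fin (n' + 1)) (Fop N R c'))) :=
  left_invariant_subspace_general N R hR n' c' v
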